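/- arXiv:1011.0450 — 4 statements merged into one kernel-verified Lean document; each statement's English description precedes it below -/
import Mathlib

section
/- Let A_1,...,A_k be m-by-n real matrices and b_1,...,b_k vectors in R^m. Suppose x0 in R^n satisfies b_i = A_i x0 for all i in a subset S0 of {1,...,k} with |S0| = s and s > k/2, and suppose that for every subset Sc of {1,...,k} with |Sc| = 2s - k, the (2s-k)m-by-n matrix obtained by vertically stacking the blocks {A_i : i in Sc} has rank n. Then x0 is the unique vector satisfying s of the subsystems: for any x1 in R^n and any subset S1 of {1,...,k} with |S1| = s such that b_i = A_i x1 for all i in S1, it holds that x1 = x0. -/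
/-- Euclidean norm of a vector in `ℝ^m`. -/
noncomputable def euclNorm {m : ℕ} (v : Fin m → ℝ) : ℝ :=
  Real.sqrt (∑ j, v j ^ 2)

/-!
Two sets of `s` sensors out of `k` share at least `2s - k` sensors. On the shared sensors
`A_i x₀ = b_i = A_i x₁`, so the stacked matrix over them sends `x₀` and `x₁` to the same vector;
having full column rank, it is injective, hence `x₁ = x₀`.
-/

namespace Matrix

variable {K ι m n : Type*}

theorem mulVec_injective_of_rank_eq_card [Field K] [Fintype m] [Fintype n] {M : Matrix m n K}
    (hM : M.rank = Fintype.card n) : Function.Injective M.mulVec := by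
  have hker : LinearMap.ker M.mulVecLin = ⊥ := by
    have hrn := M.mulVecLin.finrank_range_add_finrank_ker
    rw [← Matrix.rank, hM, Module.finrank_fintype_fun_eq_card] at hrn
    exact Submodule.finrank_eq_zero.mp (by omega)
  exact LinearMap.ker_eq_bot.mp hker

/-- The paper's `A_S`. -/
def stack (A : ι → Matrix m n K) (S : Finset ι) : Matrix (S × m) n K :=
  of fun p j => A p.1 p.2 j

theorem stack_mulVec [NonUnitalNonAssocSemiring K] [Fintype n] (A : ι → Matrix m n K)
    (S : Finset ι) (x : n → K) : stack A S *ᵥ x = fun p => (A p.1 *ᵥ x) p.2 :=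
  rfl

theorem eq_of_forall_mulVec_eq_of_rank_stack [Field K] [Fintype m] [Fintype n]
    {A : ι → Matrix m n K} {S : Finset ι} (hS : (stack A S).rank = Fintype.card n)
    {x y : n → K} (h : ∀ i ∈ S, A i *ᵥ x = A i *ᵥ y) : x = y := by
  refine mulVec_injective_of_rank_eq_card hS ?_
  ext ⟨⟨i, hi⟩, r⟩
  simp only [stack_mulVec, h i hi]

end Matrix

theorem Finset.exists_subset_inter_card_eq {α : Type*} [Fintype α] [DecidableEq α]
    (s t : Finset α) : ∃ u ⊆ s ∩ t, u.card = s.card + t.card - Fintype.card α := by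
  have hunion : (s ∪ t).card ≤ Fintype.card α := card_le_univ _
  have hinter := card_union_add_card_inter s t
  exact exists_subset_card_eq (by omega)

theorem unique_P0_minimizer_general {k m n s : ℕ}
    (A : Fin k → Matrix (Fin m) (Fin n) ℝ) (b : Fin k → Fin m → ℝ)
    (x0 : Fin n → ℝ) (S0 : Finset (Fin k))
    (hcard : S0.card = s)
    (hcons : ∀ i ∈ S0, b i = (A i).mulVec x0)
    (hrank : ∀ Sc : Finset (Fin k), Sc.card = 2 * s - k →
      (Matrix.of fun (p : ↥Sc × Fin m) (j : Fin n) => A p.1 p.2 j).rank = n) :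
    ∀ (x1 : Fin n → ℝ) (S1 : Finset (Fin k)), S1.card = s →
      (∀ i ∈ S1, b i = (A i).mulVec x1) → x1 = x0 := by
  intro x1 S1 hcard1 hcons1
  obtain ⟨Sc, hSc, hSccard⟩ := Finset.exists_subset_inter_card_eq S0 S1
  rw [hcard, hcard1, Fintype.card_fin, ← two_mul] at hSccard
  have hfull : (Matrix.stack A Sc).rank = Fintype.card (Fin n) := by
    rw [Fintype.card_fin]
    exact hrank Sc hSccard
  refine Matrix.eq_of_forall_mulVec_eq_of_rank_stack hfull fun i hi => ?_
  obtain ⟨hi0, hi1⟩ := Finset.mem_inter.mp (hSc hi)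
  rw [← hcons1 i hi1, hcons i hi0]

/-- If `x0` satisfies `b i = A i x0` for all `i` in a subset `S0` of
cardinality `s > k/2`, and every stacked submatrix over a subset of cardinality
`2s - k` has full column rank `n`, then `x0` is the unique vector satisfying `s`
of the subsystems. -/
theorem unique_P0_minimizer {k m n s : ℕ}
    (A : Fin k → Matrix (Fin m) (Fin n) ℝ) (b : Fin k → Fin m → ℝ)
    (x0 : Fin n → ℝ) (S0 : Finset (Fin k))
    (hcard : S0.card = s) (hs : k < 2 * s)
    (hcons : ∀ i ∈ S0, b i = (A i).mulVec x0)
    (hrank : ∀ Sc : Finset (Fin k), Sc.card = 2 * s - k →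
      (Matrix.of fun (p : ↥Sc × Fin m) (j : Fin n) => A p.1 p.2 j).rank = n) :
    ∀ (x1 : Fin n → ℝ) (S1 : Finset (Fin k)), S1.card = s →
      (∀ i ∈ S1, b i = (A i).mulVec x1) → x1 = x0 :=
  unique_P0_minimizer_general A b x0 S0 hcard hcons hrank
end

section
/- Let A_1,...,A_k be m-by-n real matrices with vertical stack A in R^{km x n}, let S be a subset of {1,...,k} with |S| = s > k/2, and let x0 in R^n satisfy b_i = A_i x0 for all i in S (the b_i for i not in S are arbitrary vectors in R^m). Suppose that for every nonzero v in the column space of A, the sum over i in S of ||v_i||_2 is strictly greater than the sum over i not in S of ||v_i||_2, where v_i is the i-th m-by-1 block of v. Then for every x in R^n with A x different from A x0, one has sum_{i=1}^k ||b_i - A_i x||_2 > sum_{i=1}^k ||b_i - A_i x0||_2; that is, x0 strictly minimizes the (P1) cost among all vectors not producing the same residuals. -/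
/-- The vertical stack of the matrices `A 1, ..., A k`. -/
def stack {k m n : ℕ} (A : Fin k → Matrix (Fin m) (Fin n) ℝ) :
    Matrix (Fin k × Fin m) (Fin n) ℝ :=
  Matrix.of fun p j => A p.1 p.2 j

lemma euclNorm_eq {m : ℕ} (v : Fin m → ℝ) :
    euclNorm v = ‖(WithLp.equiv 2 (Fin m → ℝ)).symm v‖ := by
  rw [EuclideanSpace.norm_eq]
  simp [euclNorm, Real.norm_eq_abs, sq_abs]

lemma euclNorm_zero {m : ℕ} : euclNorm (0 : Fin m → ℝ) = 0 := by
  simp [euclNorm_eq]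

lemma euclNorm_triangle {m : ℕ} (a c : Fin m → ℝ) :
    euclNorm (a + c) ≤ euclNorm a + euclNorm c := by
  simp only [euclNorm_eq]
  exact norm_add_le _ _

/-- Under the range-space condition for the set `S` of consistent
sensors (with `|S| = s > k/2`), the vector `x0` strictly minimizes the (P1) cost
among all vectors not producing the same residuals. -/
theorem P1_strict_minimizer {k m n s : ℕ}
    (A : Fin k → Matrix (Fin m) (Fin n) ℝ) (b : Fin k → Fin m → ℝ)
    (S : Finset (Fin k)) (hcard : S.card = s) (hs : k < 2 * s)
    (x0 : Fin n → ℝ) (hcons : ∀ i ∈ S, b i = (A i).mulVec x0)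
    (hcond : ∀ v : Fin k × Fin m → ℝ,
      (∃ u : Fin n → ℝ, (stack A).mulVec u = v) → v ≠ 0 →
        ∑ i ∈ Sᶜ, euclNorm (fun j => v (i, j)) < ∑ i ∈ S, euclNorm (fun j => v (i, j))) :
    ∀ x : Fin n → ℝ, (stack A).mulVec x ≠ (stack A).mulVec x0 →
      ∑ i, euclNorm (b i - (A i).mulVec x0) < ∑ i, euclNorm (b i - (A i).mulVec x) := by
  intro x hx
  set v : Fin k × Fin m → ℝ := (stack A).mulVec (x0 - x) with hv
  have hvsub : v = (stack A).mulVec x0 - (stack A).mulVec x := by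
    rw [hv, Matrix.mulVec_sub]
  have hvne : v ≠ 0 := by
    intro h
    apply hx
    have := sub_eq_zero.mp (hvsub ▸ h)
    exact this.symm
  have hkey := hcond v ⟨x0 - x, rfl⟩ hvne
  -- block identity
  have hblock : ∀ i : Fin k, (fun j => v (i, j)) = (A i).mulVec (x0 - x) := by
    intro i
    funext j
    rfl
  -- split sums over S and Sᶜ
  have hsplit : ∀ f : Fin k → ℝ, ∑ i, f i = ∑ i ∈ S, f i + ∑ i ∈ Sᶜ, f i := by
    intro f
    exact (Finset.sum_add_sum_compl S f).symm
  -- LHS: terms over S vanish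
  have hLS : ∑ i ∈ S, euclNorm (b i - (A i).mulVec x0) = 0 := by
    apply Finset.sum_eq_zero
    intro i hi
    rw [hcons i hi, sub_self, euclNorm_zero]
  -- RHS terms over S equal euclNorm of the block of v
  have hRS : ∑ i ∈ S, euclNorm (b i - (A i).mulVec x) =
      ∑ i ∈ S, euclNorm (fun j => v (i, j)) := by
    apply Finset.sum_congr rfl
    intro i hi
    rw [hcons i hi, hblock i, Matrix.mulVec_sub]
  -- reverse triangle on Sᶜ
  have hRT : ∀ i : Fin k, euclNorm (b i - (A i).mulVec x0) ≤
      euclNorm (b i - (A i).mulVec x) + euclNorm (fun j => v (i, j)) := by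
    intro i
    have : b i - (A i).mulVec x0 = (b i - (A i).mulVec x) + -(fun j => v (i, j)) := by
      rw [hblock i, Matrix.mulVec_sub]
      abel
    rw [this]
    calc euclNorm ((b i - (A i).mulVec x) + -(fun j => v (i, j)))
        ≤ euclNorm (b i - (A i).mulVec x) + euclNorm (-(fun j => v (i, j))) :=
          euclNorm_triangle _ _
      _ = euclNorm (b i - (A i).mulVec x) + euclNorm (fun j => v (i, j)) := by
          simp only [euclNorm_eq]
          rw [show (WithLp.equiv 2 (Fin m → ℝ)).symm (-(fun j => v (i, j))) =
            -((WithLp.equiv 2 (Fin m → ℝ)).symm (fun j => v (i, j))) from rfl, norm_neg]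
  calc ∑ i, euclNorm (b i - (A i).mulVec x0)
      = ∑ i ∈ Sᶜ, euclNorm (b i - (A i).mulVec x0) := by
        rw [hsplit, hLS, zero_add]
    _ ≤ ∑ i ∈ Sᶜ, (euclNorm (b i - (A i).mulVec x) + euclNorm (fun j => v (i, j))) :=
        Finset.sum_le_sum fun i _ => hRT i
    _ = ∑ i ∈ Sᶜ, euclNorm (b i - (A i).mulVec x) + ∑ i ∈ Sᶜ, euclNorm (fun j => v (i, j)) :=
        Finset.sum_add_distrib
    _ < ∑ i ∈ Sᶜ, euclNorm (b i - (A i).mulVec x) + ∑ i ∈ S, euclNorm (fun j => v (i, j)) := by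
        linarith
    _ = ∑ i ∈ Sᶜ, euclNorm (b i - (A i).mulVec x) + ∑ i ∈ S, euclNorm (b i - (A i).mulVec x) := by
        rw [hRS]
    _ = ∑ i, euclNorm (b i - (A i).mulVec x) := by
        rw [hsplit (fun i => euclNorm (b i - (A i).mulVec x)), add_comm]
end

section
/- Let A_1,...,A_k be m-by-n real matrices with vertical stack A, let x0 in R^n be such that v := A x0 is nonzero, and let (S, S-bar) be a partition of {1,...,k} with |S| = s such that the sum over i in S of ||v_i||_2 is at most the sum over i in S-bar of ||v_i||_2, where v_i is the i-th m-by-1 block of v. Define data by b_i := A_i x0 for i in S and b_i := (1/2) A_i x0 for i in S-bar. Then the (P1) cost of x0/2 equals (1/2) sum_{i in S} ||v_i||_2, the (P1) cost of x0 equals (1/2) sum_{i in S-bar} ||v_i||_2, and consequently sum_{i=1}^k ||b_i - A_i (x0/2)||_2 <= sum_{i=1}^k ||b_i - A_i x0||_2, so x0 is not the unique minimizer of (P1) even though b_i = A_i x0 for all i in S. -/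
/-!
Along the ray `t ↦ t • x0` every residual `b i - A i (t • x0)` is a multiple of `v i = A i x0`:
`(1 - t) • v i` on `S` and `(1/2 - t) • v i` off `S`. So the (P1) cost at `t • x0` is
`|1 - t| ∑_{S} ‖v i‖ + |1/2 - t| ∑_{Sᶜ} ‖v i‖`, which at `t = 1/2` and `t = 1` gives the two
formulas, and the failed range-space condition compares them.
-/

lemma euclNorm_smul {m : ℕ} (c : ℝ) (w : Fin m → ℝ) :
    euclNorm (c • w) = |c| * euclNorm w := by
  have hsum : ∑ j, (c • w) j ^ 2 = c ^ 2 * ∑ j, w j ^ 2 := by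
    simp only [Pi.smul_apply, smul_eq_mul, mul_pow, Finset.mul_sum]
  rw [euclNorm, euclNorm, hsum, Real.sqrt_mul (sq_nonneg c), Real.sqrt_sq_eq_abs]

lemma stack_mulVec_block {k m n : ℕ} (A : Fin k → Matrix (Fin m) (Fin n) ℝ) (x : Fin n → ℝ)
    (i : Fin k) : (fun j => (stack A).mulVec x (i, j)) = (A i).mulVec x :=
  rfl

lemma sum_euclNorm_sub_smul_of_piecewise {k m : ℕ} (y b : Fin k → Fin m → ℝ)
    (S : Finset (Fin k)) (α β t : ℝ)
    (hb : ∀ i, b i = if i ∈ S then α • y i else β • y i) :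
    ∑ i, euclNorm (b i - t • y i)
      = |α - t| * ∑ i ∈ S, euclNorm (y i) + |β - t| * ∑ i ∈ Sᶜ, euclNorm (y i) := by
  rw [← Finset.sum_add_sum_compl S, Finset.mul_sum, Finset.mul_sum]
  congr 1 <;> refine Finset.sum_congr rfl fun i hi => ?_
  · rw [hb i, if_pos hi, ← sub_smul, euclNorm_smul]
  · rw [hb i, if_neg (Finset.mem_compl.mp hi), ← sub_smul, euclNorm_smul]

theorem P1_not_unique_construction_general {k m n : ℕ}
    (A : Fin k → Matrix (Fin m) (Fin n) ℝ) (x0 : Fin n → ℝ)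
    (S : Finset (Fin k))
    (v : Fin k × Fin m → ℝ) (hv : v = (stack A).mulVec x0)
    (hineq : ∑ i ∈ S, euclNorm (fun j => v (i, j)) ≤ ∑ i ∈ Sᶜ, euclNorm (fun j => v (i, j)))
    (b : Fin k → Fin m → ℝ)
    (hb : ∀ i, b i = if i ∈ S then (A i).mulVec x0 else (1 / 2 : ℝ) • (A i).mulVec x0) :
    (∑ i, euclNorm (b i - (A i).mulVec ((1 / 2 : ℝ) • x0))
        = (1 / 2) * ∑ i ∈ S, euclNorm (fun j => v (i, j)))
    ∧ (∑ i, euclNorm (b i - (A i).mulVec x0)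
        = (1 / 2) * ∑ i ∈ Sᶜ, euclNorm (fun j => v (i, j)))
    ∧ (∑ i, euclNorm (b i - (A i).mulVec ((1 / 2 : ℝ) • x0))
        ≤ ∑ i, euclNorm (b i - (A i).mulVec x0)) := by
  have hblock : ∀ i, (fun j => v (i, j)) = (A i).mulVec x0 := fun i =>
    hv ▸ stack_mulVec_block A x0 i
  have hb' : ∀ i, b i = if i ∈ S then (1 : ℝ) • (A i).mulVec x0
      else (1 / 2 : ℝ) • (A i).mulVec x0 := by
    simpa only [one_smul] using hb
  have cost := fun t => sum_euclNorm_sub_smul_of_piecewise _ b S 1 (1 / 2) t hb'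
  have cost_half : ∑ i, euclNorm (b i - (A i).mulVec ((1 / 2 : ℝ) • x0))
      = (1 / 2) * ∑ i ∈ S, euclNorm (fun j => v (i, j)) := by
    simp only [Matrix.mulVec_smul, cost, hblock]
    norm_num
  have cost_one : ∑ i, euclNorm (b i - (A i).mulVec x0)
      = (1 / 2) * ∑ i ∈ Sᶜ, euclNorm (fun j => v (i, j)) := by
    simpa only [one_smul, hblock] using (cost 1).trans (by norm_num)
  exact ⟨cost_half, cost_one, by rw [cost_half, cost_one]; linarith⟩

/-- necessity construction: with `v = A x0 ≠ 0`, a partition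
`(S, Sᶜ)` with `|S| = s` on which the range-space condition fails, and data
`b i = A i x0` on `S` and `b i = (1/2) A i x0` on `Sᶜ`, the (P1) cost of `x0/2`
equals `(1/2) ∑_{i∈S} ‖v_i‖₂`, the (P1) cost of `x0` equals
`(1/2) ∑_{i∈Sᶜ} ‖v_i‖₂`, and hence the cost of `x0/2` is at most that of `x0`,
so `x0` is not the unique minimizer of (P1). -/
theorem P1_not_unique_construction {k m n s : ℕ}
    (A : Fin k → Matrix (Fin m) (Fin n) ℝ) (x0 : Fin n → ℝ)
    (S : Finset (Fin k)) (hcard : S.card = s)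
    (v : Fin k × Fin m → ℝ) (hv : v = (stack A).mulVec x0) (hvne : v ≠ 0)
    (hineq : ∑ i ∈ S, euclNorm (fun j => v (i, j)) ≤ ∑ i ∈ Sᶜ, euclNorm (fun j => v (i, j)))
    (b : Fin k → Fin m → ℝ)
    (hb : ∀ i, b i = if i ∈ S then (A i).mulVec x0 else (1 / 2 : ℝ) • (A i).mulVec x0) :
    (∑ i, euclNorm (b i - (A i).mulVec ((1 / 2 : ℝ) • x0))
        = (1 / 2) * ∑ i ∈ S, euclNorm (fun j => v (i, j)))
    ∧ (∑ i, euclNorm (b i - (A i).mulVec x0)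
        = (1 / 2) * ∑ i ∈ Sᶜ, euclNorm (fun j => v (i, j)))
    ∧ (∑ i, euclNorm (b i - (A i).mulVec ((1 / 2 : ℝ) • x0))
        ≤ ∑ i, euclNorm (b i - (A i).mulVec x0)) :=
  P1_not_unique_construction_general A x0 S v hv hineq b hb
end

section
/- Let A_1,...,A_k be m-by-n real matrices, b_1,...,b_k vectors in R^m, and lambda >= 0. Define h(r) := (1/2)||r||_2^2 if ||r||_2 <= lambda and h(r) := lambda^2/2 if ||r||_2 > lambda. Suppose x* in R^n minimizes the function x |-> sum_{i=1}^k h(b_i - A_i x), let S* := { i : ||b_i - A_i x*||_2 <= lambda }, and let s* := |S*|. Then x* solves the combinatorial problem (RSN1) with parameter s*: for every x in R^n and every subset S of {1,...,k} with |S| = s*, one has sum_{i in S*} ||b_i - A_i x*||_2^2 <= sum_{i in S} ||b_i - A_i x||_2^2. -/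
/-- The truncated least-squares functional
`h(r) = (1/2)‖r‖₂²` if `‖r‖₂ ≤ λ` and `h(r) = λ²/2` otherwise. -/
noncomputable def hTrunc {m : ℕ} (lam : ℝ) (r : Fin m → ℝ) : ℝ :=
  if euclNorm r ≤ lam then (1 / 2) * euclNorm r ^ 2 else lam ^ 2 / 2

open Finset

lemma euclNorm_nonneg {m : ℕ} (v : Fin m → ℝ) : 0 ≤ euclNorm v :=
  Real.sqrt_nonneg _

lemma hTrunc_le_half_sq {m : ℕ} {lam : ℝ} (hlam : 0 ≤ lam) (r : Fin m → ℝ) :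
    hTrunc lam r ≤ euclNorm r ^ 2 / 2 := by
  unfold hTrunc
  split_ifs with h
  · linarith
  · nlinarith [not_le.mp h]

lemma hTrunc_le_half_sq_lam {m : ℕ} (lam : ℝ) (r : Fin m → ℝ) :
    hTrunc lam r ≤ lam ^ 2 / 2 := by
  unfold hTrunc
  split_ifs with h
  · nlinarith [euclNorm_nonneg r]
  · exact le_rfl

section Sums

variable {ι : Type*} [Fintype ι] [DecidableEq ι] {m : ℕ}

lemma sum_hTrunc_le {lam : ℝ} (hlam : 0 ≤ lam) (r : ι → Fin m → ℝ) (S : Finset ι) :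
    ∑ i, hTrunc lam (r i) ≤ (∑ i ∈ S, euclNorm (r i) ^ 2) / 2 + #Sᶜ * (lam ^ 2 / 2) := by
  rw [← sum_add_sum_compl S, sum_div, ← nsmul_eq_mul, ← sum_const]
  gcongr with i _ i _
  · exact hTrunc_le_half_sq hlam _
  · exact hTrunc_le_half_sq_lam _ _

lemma sum_hTrunc_eq (lam : ℝ) (r : ι → Fin m → ℝ) :
    ∑ i, hTrunc lam (r i)
      = (∑ i ∈ univ.filter (fun i => euclNorm (r i) ≤ lam), euclNorm (r i) ^ 2) / 2
        + #(univ.filter fun i => euclNorm (r i) ≤ lam)ᶜ * (lam ^ 2 / 2) := by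
  rw [← sum_add_sum_compl (univ.filter fun i => euclNorm (r i) ≤ lam), sum_div,
    ← nsmul_eq_mul, ← sum_const]
  congr 1
  · refine sum_congr rfl fun i hi => ?_
    simp [hTrunc, (mem_filter.mp hi).2, div_eq_inv_mul]
  · refine sum_congr rfl fun i hi => ?_
    simp_all [hTrunc]

end Sums

/-- if `x*` minimizes `x ↦ ∑ᵢ h(bᵢ - Aᵢ x)` and
`S* = {i : ‖bᵢ - Aᵢ x*‖₂ ≤ λ}` with `s* = |S*|`, then `x*` solves the
combinatorial problem (RSN1) with parameter `s*`: for every `x` and every subset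
`S` of cardinality `s*`, `∑_{i ∈ S*} ‖bᵢ - Aᵢ x*‖₂² ≤ ∑_{i ∈ S} ‖bᵢ - Aᵢ x‖₂²`. -/
theorem truncated_ls_solves_RSN1 {k m n : ℕ}
    (A : Fin k → Matrix (Fin m) (Fin n) ℝ) (b : Fin k → Fin m → ℝ)
    (lam : ℝ) (hlam : 0 ≤ lam) (xstar : Fin n → ℝ)
    (hmin : ∀ x : Fin n → ℝ,
      ∑ i, hTrunc lam (b i - (A i).mulVec xstar)
        ≤ ∑ i, hTrunc lam (b i - (A i).mulVec x)) :
    ∀ (x : Fin n → ℝ) (S : Finset (Fin k)),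
      S.card =
        (Finset.univ.filter
          fun i => euclNorm (b i - (A i).mulVec xstar) ≤ lam).card →
      ∑ i ∈ Finset.univ.filter
          (fun i => euclNorm (b i - (A i).mulVec xstar) ≤ lam),
          euclNorm (b i - (A i).mulVec xstar) ^ 2
        ≤ ∑ i ∈ S, euclNorm (b i - (A i).mulVec x) ^ 2 := by
  intro x S hcard
  have key := (sum_hTrunc_eq lam _).symm.trans_le
    ((hmin x).trans (sum_hTrunc_le hlam (fun i => b i - (A i).mulVec x) S))
  rw [card_compl, card_compl, hcard] at key
  linarith
end
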